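/- arXiv:2304.03624 — 2 statements merged into one kernel-verified Lean document; each statement's English description precedes it below -/
import Mathlib

section
/- Let $p > 1$ and $q \in (1,p]$. For real numbers $a_1, a_2, b_1, b_2 \geq 0$, $t \in [0,1]$, define $\sigma_t(a,b) = (t a^q + (1-t) b^q)^{1/q}$. Then $|\sigma_t(a_1,b_1) - \sigma_t(a_2,b_2)|^p \leq t|a_1 - a_2|^p + (1-t)|b_1 - b_2|^p$. -/
open Finset

/-- Weighted two-term power-mean inequality `M_q ≤ M_p` in the form
`(t x^q + (1-t) y^q)^(p/q) ≤ t x^p + (1-t) y^p`. -/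
private lemma powmean (p q t x y : ℝ) (hq : 0 < q) (hqp : q ≤ p)
    (hx : 0 ≤ x) (hy : 0 ≤ y) (ht0 : 0 ≤ t) (ht1 : t ≤ 1) :
    (t * x ^ q + (1 - t) * y ^ q) ^ (p / q) ≤ t * x ^ p + (1 - t) * y ^ p := by
  have h := Real.rpow_arith_mean_le_arith_mean_rpow (Finset.univ : Finset (Fin 2))
    (fun i => if i = 0 then t else 1 - t) (fun i => if i = 0 then x ^ q else y ^ q)
    (by intro i _; fin_cases i <;> simp <;> linarith)
    (by simp) (by intro i _; fin_cases i <;> simp [Real.rpow_nonneg, hx, hy])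
    ((one_le_div hq).mpr hqp)
  simp only [Fin.sum_univ_two] at h
  norm_num at h
  calc (t * x ^ q + (1 - t) * y ^ q) ^ (p / q)
      ≤ t * (x ^ q) ^ (p / q) + (1 - t) * (y ^ q) ^ (p / q) := h
    _ = t * x ^ p + (1 - t) * y ^ p := by
        rw [← Real.rpow_mul hx, ← Real.rpow_mul hy, mul_comm q (p / q),
          div_mul_cancel₀ p hq.ne']

/-- One-sided weighted Minkowski-type estimate. -/
private lemma sigma_le (q t a1 a2 b1 b2 X Y : ℝ) (hq : 1 ≤ q)
    (ha1 : 0 ≤ a1) (ha2 : 0 ≤ a2) (hb1 : 0 ≤ b1) (hb2 : 0 ≤ b2)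
    (hX : 0 ≤ X) (hY : 0 ≤ Y) (hXa : a1 ≤ a2 + X) (hYb : b1 ≤ b2 + Y)
    (ht0 : 0 ≤ t) (ht1 : t ≤ 1) :
    (t * a1 ^ q + (1 - t) * b1 ^ q) ^ (1 / q)
      ≤ (t * a2 ^ q + (1 - t) * b2 ^ q) ^ (1 / q)
        + (t * X ^ q + (1 - t) * Y ^ q) ^ (1 / q) := by
  have hq0 : 0 < q := lt_of_lt_of_le one_pos hq
  have ht1' : 0 ≤ 1 - t := by linarith
  set c := t ^ (1 / q) with hc
  set d := (1 - t) ^ (1 / q) with hd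
  have hc0 : 0 ≤ c := Real.rpow_nonneg ht0 _
  have hd0 : 0 ≤ d := Real.rpow_nonneg ht1' _
  have hcq : c ^ q = t := by
    rw [hc, ← Real.rpow_mul ht0, one_div_mul_cancel hq0.ne', Real.rpow_one]
  have hdq : d ^ q = 1 - t := by
    rw [hd, ← Real.rpow_mul ht1', one_div_mul_cancel hq0.ne', Real.rpow_one]
  have key (u v : ℝ) (hu : 0 ≤ u) (hv : 0 ≤ v) :
      t * u ^ q + (1 - t) * v ^ q
        = ∑ i : Fin 2, (fun i => if i = 0 then c * u else d * v) i ^ q := by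
    simp only [Fin.sum_univ_two]
    norm_num
    rw [Real.mul_rpow hc0 hu, Real.mul_rpow hd0 hv, hcq, hdq]
  have hmono : (t * a1 ^ q + (1 - t) * b1 ^ q) ^ (1 / q)
      ≤ (t * (a2 + X) ^ q + (1 - t) * (b2 + Y) ^ q) ^ (1 / q) := by
    apply Real.rpow_le_rpow
    · positivity
    · apply add_le_add
      · exact mul_le_mul_of_nonneg_left (Real.rpow_le_rpow ha1 hXa hq0.le) ht0
      · exact mul_le_mul_of_nonneg_left (Real.rpow_le_rpow hb1 hYb hq0.le) ht1'
    · positivity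
  refine hmono.trans ?_
  have hmink := Real.Lp_add_le_of_nonneg (Finset.univ : Finset (Fin 2))
    (f := fun i => if i = 0 then c * a2 else d * b2)
    (g := fun i => if i = 0 then c * X else d * Y) hq
    (by intro i _; fin_cases i <;> simp <;> positivity)
    (by intro i _; fin_cases i <;> simp <;> positivity)
  rw [← key a2 b2 ha2 hb2, ← key X Y hX hY] at hmink
  calc (t * (a2 + X) ^ q + (1 - t) * (b2 + Y) ^ q) ^ (1 / q)
      = (∑ i : Fin 2, ((fun i => if i = 0 then c * a2 else d * b2) i
          + (fun i => if i = 0 then c * X else d * Y) i) ^ q) ^ (1 / q) := by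
        rw [show t * (a2 + X) ^ q + (1 - t) * (b2 + Y) ^ q
            = ∑ i : Fin 2, (fun i => if i = 0 then c * (a2 + X) else d * (b2 + Y)) i ^ q from
          key (a2 + X) (b2 + Y) (by positivity) (by positivity)]
        congr 1
        apply Finset.sum_congr rfl
        intro i _
        fin_cases i <;> simp <;> ring_nf
    _ ≤ _ := hmink

/-- Hidden convexity: for `1 < q ≤ p`, nonnegative `a₁,a₂,b₁,b₂` and `t ∈ [0,1]`, with
`σ_t(a,b) = (t a^q + (1-t) b^q)^{1/q}`, one has
`|σ_t(a₁,b₁) - σ_t(a₂,b₂)|^p ≤ t|a₁-a₂|^p + (1-t)|b₁-b₂|^p`. -/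
theorem stmt6 (p q t a1 a2 b1 b2 : ℝ) (hp : 1 < p) (hq : 1 < q) (hqp : q ≤ p)
    (ha1 : 0 ≤ a1) (ha2 : 0 ≤ a2) (hb1 : 0 ≤ b1) (hb2 : 0 ≤ b2)
    (ht0 : 0 ≤ t) (ht1 : t ≤ 1) :
    |(t * a1 ^ q + (1 - t) * b1 ^ q) ^ (1 / q) - (t * a2 ^ q + (1 - t) * b2 ^ q) ^ (1 / q)| ^ p
      ≤ t * |a1 - a2| ^ p + (1 - t) * |b1 - b2| ^ p := by
  have hq0 : 0 < q := by linarith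
  have ht1' : 0 ≤ 1 - t := by linarith
  set X := |a1 - a2| with hX
  set Y := |b1 - b2| with hY
  have hX0 : 0 ≤ X := abs_nonneg _
  have hY0 : 0 ≤ Y := abs_nonneg _
  have hA : |(t * a1 ^ q + (1 - t) * b1 ^ q) ^ (1 / q)
      - (t * a2 ^ q + (1 - t) * b2 ^ q) ^ (1 / q)|
      ≤ (t * X ^ q + (1 - t) * Y ^ q) ^ (1 / q) := by
    rw [abs_sub_le_iff]
    constructor
    · have := sigma_le q t a1 a2 b1 b2 X Y hq.le ha1 ha2 hb1 hb2 hX0 hY0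
        (by have := le_abs_self (a1 - a2); linarith)
        (by have := le_abs_self (b1 - b2); linarith) ht0 ht1
      linarith
    · have := sigma_le q t a2 a1 b2 b1 X Y hq.le ha2 ha1 hb2 hb1 hX0 hY0
        (by have := neg_abs_le (a1 - a2); linarith)
        (by have := neg_abs_le (b1 - b2); linarith) ht0 ht1
      linarith
  calc |(t * a1 ^ q + (1 - t) * b1 ^ q) ^ (1 / q)
      - (t * a2 ^ q + (1 - t) * b2 ^ q) ^ (1 / q)| ^ p
      ≤ ((t * X ^ q + (1 - t) * Y ^ q) ^ (1 / q)) ^ p :=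
        Real.rpow_le_rpow (abs_nonneg _) hA (by linarith)
    _ = (t * X ^ q + (1 - t) * Y ^ q) ^ (p / q) := by
        rw [← Real.rpow_mul (by positivity), one_div_mul_eq_div]
    _ ≤ t * X ^ p + (1 - t) * Y ^ p :=
        powmean p q t X Y hq0 hqp hX0 hY0 ht0 ht1
end

section
/- Let $u : \mathbb{R}^n \to \mathbb{R}$ be measurable, $p > 1$, $0 < s < 1$, $\Omega \subset \mathbb{R}^n$ an open set with diameter $d = \mathrm{diam}\,\Omega < \infty$, $K \subset \Omega$, and $x_0 \in \Omega$ a point with $u(x_0) = \inf_{\mathbb{R}^n} u \leq 0$. Suppose $2\int_{\mathbb{R}^n} \frac{|u(x_0)-u(y)|^{p-2}(u(x_0)-u(y))}{|x_0 - y|^{n+ps}}\,dy \geq -2 d^{-(n+ps)} \int_K u(y)^{p-1}\,dy$ where $u \geq 0$ on $K$. Then $u(y) = u(x_0)$ for almost every $y \in \mathbb{R}^n \setminus K$. Consequently, if additionally $u \geq 0$ on $\mathbb{R}^n \setminus \Omega$ and $\mathbb{R}^n \setminus \Omega$ has positive measure, then $u = 0$ a.e. in $\mathbb{R}^n \setminus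 K$. -/
open MeasureTheory Metric
open scoped ENNReal

/-- In an open bounded set, the distance between two points is strictly less than the diameter. -/
lemma dist_lt_diam_of_isOpen {E : Type*} [NormedAddCommGroup E] [NormedSpace ℝ E]
    {Ω : Set E} (hΩo : IsOpen Ω) (hΩb : Bornology.IsBounded Ω) (hd0 : 0 < diam Ω)
    {x y : E} (hx : x ∈ Ω) (hy : y ∈ Ω) : dist x y < diam Ω := by
  obtain ⟨ε, hε, hball⟩ := Metric.isOpen_iff.1 hΩo y hy
  by_cases hxy : y = x
  · subst hxy; simpa using hd0
  · have hne : y - x ≠ 0 := sub_ne_zero.2 hxy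
    have hnorm : (0:ℝ) < ‖y - x‖ := norm_pos_iff.2 hne
    set t : ℝ := (ε / 2) * ‖y - x‖⁻¹ with ht
    have htpos : 0 < t := by positivity
    set y' : E := y + t • (y - x) with hy'
    have hmem : y' ∈ Ω := by
      apply hball
      have : dist y' y = t * ‖y - x‖ := by
        rw [dist_eq_norm, hy']
        simp [norm_smul, abs_of_pos htpos]
      have ht2 : t * ‖y - x‖ = ε / 2 := by
        rw [ht, mul_assoc, inv_mul_cancel₀ (ne_of_gt hnorm), mul_one]
      rw [Metric.mem_ball, this, ht2]
      linarith
    have hdist : dist x y' = dist x y + ε / 2 := by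
      have h1 : y' - x = (1 + t) • (y - x) := by
        rw [hy', add_smul, one_smul]
        abel
      have ht2 : t * ‖y - x‖ = ε / 2 := by
        rw [ht, mul_assoc, inv_mul_cancel₀ (ne_of_gt hnorm), mul_one]
      rw [dist_comm x y', dist_eq_norm, h1, norm_smul, Real.norm_eq_abs,
        abs_of_pos (by linarith : (0:ℝ) < 1 + t), add_mul, one_mul, ht2,
        dist_comm x y, dist_eq_norm]
    have := Metric.dist_le_diam_of_mem hΩb hx hmem
    rw [hdist] at this
    linarith

/-- If `u` attains its global infimum `u(x₀) ≤ 0` at `x₀ ∈ Ω` and the fractional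
`p`-Laplacian integral at `x₀` is bounded below by
`-2 d^{-(n+ps)} ∫_K u^{p-1}` (here phrased via the nonnegative integral of the
negated integrand), then `u = u(x₀)` a.e. off `K`; if moreover `u ≥ 0` off `Ω` and
`ℝⁿ \ Ω` has positive measure, then `u = 0` a.e. off `K`. -/
theorem stmt9 (n : ℕ) (hn : 1 ≤ n) (p s d : ℝ) (hp : 1 < p) (hs0 : 0 < s) (hs1 : s < 1)
    (Ω K : Set (EuclideanSpace ℝ (Fin n))) (hΩo : IsOpen Ω) (hΩb : Bornology.IsBounded Ω)
    (hd : d = diam Ω) (hKΩ : K ⊆ Ω)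
    (u : EuclideanSpace ℝ (Fin n) → ℝ) (hum : Measurable u)
    (x0 : EuclideanSpace ℝ (Fin n)) (hx0 : x0 ∈ Ω)
    (hinf : ∀ x, u x0 ≤ u x) (hneg : u x0 ≤ 0) (hK : ∀ y ∈ K, 0 ≤ u y)
    (hineq : (∫⁻ y, ENNReal.ofReal
        (-(|u x0 - u y| ^ (p - 2) * (u x0 - u y)) / ‖x0 - y‖ ^ ((n : ℝ) + p * s)))
      ≤ ENNReal.ofReal (d ^ (-((n : ℝ) + p * s)) * ∫ y in K, u y ^ (p - 1))) :
    (∀ᵐ y, y ∉ K → u y = u x0) ∧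
    ((∀ y ∉ Ω, 0 ≤ u y) → 0 < volume Ωᶜ → ∀ᵐ y, y ∉ K → u y = 0) := by
  set c : ℝ := (n : ℝ) + p * s with hcdef
  have hp0 : 0 < p := lt_trans one_pos hp
  have hp1 : 0 < p - 1 := by linarith
  have hc : 0 < c := by
    have hn0 : (0:ℝ) < n := by exact_mod_cast hn
    have := mul_pos hp0 hs0
    rw [hcdef]; linarith
  -- d is positive
  have hd0 : 0 < d := by
    obtain ⟨ε, hε, hball⟩ := Metric.isOpen_iff.1 hΩo x0 hx0
    set v : EuclideanSpace ℝ (Fin n) := EuclideanSpace.single (⟨0, hn⟩ : Fin n) (ε / 2) with hv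
    have hvnorm : ‖v‖ = ε / 2 := by
      rw [hv, EuclideanSpace.norm_single, Real.norm_eq_abs, abs_of_pos (by linarith)]
    have hmem : x0 + v ∈ Ω := by
      apply hball
      rw [Metric.mem_ball, dist_eq_norm, add_sub_cancel_left, hvnorm]
      linarith
    have := Metric.dist_le_diam_of_mem hΩb hx0 hmem
    have hdist : dist x0 (x0 + v) = ε / 2 := by
      rw [dist_eq_norm]; simpa [hvnorm] using (by rw [← hvnorm]; congr 1; abel : ‖x0 - (x0 + v)‖ = ‖v‖)
    rw [hd]; rw [hdist] at this; linarith
  have hstrict : ∀ y ∈ Ω, dist x0 y < d := by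
    intro y hy
    rw [hd]
    exact dist_lt_diam_of_isOpen hΩo hΩb (hd ▸ hd0) hx0 hy
  -- the simplified integrand
  set G : EuclideanSpace ℝ (Fin n) → ℝ≥0∞ :=
    fun y => ENNReal.ofReal ((u y - u x0) ^ (p - 1) / ‖x0 - y‖ ^ c) with hGdef
  have hrw : ∀ y, -(|u x0 - u y| ^ (p - 2) * (u x0 - u y)) = (u y - u x0) ^ (p - 1) := by
    intro y
    have h0 : 0 ≤ u y - u x0 := sub_nonneg.2 (hinf y)
    have habs : |u x0 - u y| = u y - u x0 := by rw [abs_sub_comm, abs_of_nonneg h0]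
    rcases eq_or_lt_of_le h0 with h | h
    · rw [habs, ← h]
      have : u x0 - u y = 0 := by linarith [h.symm ▸ (rfl : u y - u x0 = u y - u x0)]
      have h2 : u x0 - u y = -(u y - u x0) := by ring
      rw [h2, ← h]
      simp [Real.zero_rpow (by linarith : p - 1 ≠ 0)]
    · rw [habs, show u x0 - u y = -(u y - u x0) by ring, mul_neg, neg_neg,
        show p - 1 = (p - 2) + 1 by ring, Real.rpow_add h, Real.rpow_one]
  have hGeq : (fun y => ENNReal.ofReal
      (-(|u x0 - u y| ^ (p - 2) * (u x0 - u y)) / ‖x0 - y‖ ^ c)) = G := by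
    funext y; rw [hGdef]; rw [hrw y]
  rw [hGeq] at hineq
  have hGmeas : Measurable G := by
    rw [hGdef]; fun_prop
  -- positivity of G off the level set
  have hGpos : ∀ y, u y ≠ u x0 → 0 < G y := by
    intro y hy
    have h0 : 0 < u y - u x0 := lt_of_le_of_ne (sub_nonneg.2 (hinf y)) (by
      intro h; exact hy (by linarith [h.symm]))
    have hxy : x0 ≠ y := by intro h; exact hy (by rw [h])
    have hnorm : 0 < ‖x0 - y‖ := norm_pos_iff.2 (sub_ne_zero.2 hxy)
    rw [hGdef]
    exact ENNReal.ofReal_pos.2 (div_pos (Real.rpow_pos_of_pos h0 _) (Real.rpow_pos_of_pos hnorm _))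
  -- pointwise comparison on Ω
  have hpt_strict : ∀ y, y ∈ Ω → 0 ≤ u y → u y ≠ u x0 →
      ENNReal.ofReal (d ^ (-c) * u y ^ (p - 1)) < G y := by
    intro y hyΩ hyu hne
    have h0 : 0 < u y - u x0 := lt_of_le_of_ne (sub_nonneg.2 (hinf y)) fun h => hne (by linarith [h.symm])
    have hxy : x0 ≠ y := fun h => hne (by rw [h])
    have hnorm : 0 < ‖x0 - y‖ := norm_pos_iff.2 (sub_ne_zero.2 hxy)
    have hlt : ‖x0 - y‖ < d := by rw [← dist_eq_norm]; exact hstrict y hyΩ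
    have hdc : (0:ℝ) < ‖x0 - y‖ ^ c := Real.rpow_pos_of_pos hnorm _
    have hdc' : ‖x0 - y‖ ^ c < d ^ c := Real.rpow_lt_rpow (le_of_lt hnorm) hlt hc
    have hnum : (0:ℝ) < (u y - u x0) ^ (p - 1) := Real.rpow_pos_of_pos h0 _
    have key : d ^ (-c) * u y ^ (p - 1) < (u y - u x0) ^ (p - 1) / ‖x0 - y‖ ^ c := by
      have h1 : u y ^ (p - 1) ≤ (u y - u x0) ^ (p - 1) :=
        Real.rpow_le_rpow hyu (by linarith) (le_of_lt hp1)
      have h2 : d ^ (-c) = (d ^ c)⁻¹ := Real.rpow_neg (le_of_lt hd0) c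
      have h3 : (u y - u x0) ^ (p - 1) / d ^ c < (u y - u x0) ^ (p - 1) / ‖x0 - y‖ ^ c :=
        div_lt_div_of_pos_left hnum hdc hdc'
      calc d ^ (-c) * u y ^ (p - 1) ≤ d ^ (-c) * (u y - u x0) ^ (p - 1) := by
            apply mul_le_mul_of_nonneg_left h1 (Real.rpow_nonneg (le_of_lt hd0) _)
        _ = (u y - u x0) ^ (p - 1) / d ^ c := by rw [h2]; ring
        _ < _ := h3
    rw [hGdef]
    have hnn : (0:ℝ) ≤ d ^ (-c) * u y ^ (p - 1) :=
      mul_nonneg (Real.rpow_nonneg (le_of_lt hd0) _) (Real.rpow_nonneg hyu _)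
    exact (ENNReal.ofReal_lt_ofReal_iff (lt_of_le_of_lt hnn key)).2 key
  have hpt : ∀ y, y ∈ Ω → 0 ≤ u y →
      ENNReal.ofReal (d ^ (-c) * u y ^ (p - 1)) ≤ G y := by
    intro y hyΩ hyu
    by_cases hne : u y = u x0
    · have hy0 : u y = 0 := le_antisymm (hne ▸ hneg) hyu
      rw [hy0, Real.zero_rpow (by linarith : p - 1 ≠ 0), mul_zero]
      simp
    · exact le_of_lt (hpt_strict y hyΩ hyu hne)
  -- a.e. facts for the restricted measure
  set ν : Measure (EuclideanSpace ℝ (Fin n)) := volume.restrict K with hνdef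
  haveI : IsFiniteMeasure ν := by
    constructor
    rw [hνdef, Measure.restrict_apply_univ]
    exact lt_of_le_of_lt (measure_mono hKΩ) hΩb.measure_lt_top
  have haeΩ : ∀ᵐ y ∂ν, y ∈ Ω := by
    rw [ae_iff]
    have : {y | ¬ y ∈ Ω} = Ωᶜ := rfl
    rw [this, hνdef, Measure.restrict_apply hΩo.measurableSet.compl]
    have : Ωᶜ ∩ K = ∅ := by
      ext y; simp only [Set.mem_inter_iff, Set.mem_compl_iff, Set.mem_empty_iff_false, iff_false]
      rintro ⟨h1, h2⟩; exact h1 (hKΩ h2)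
    rw [this, measure_empty]
  have haeU : ∀ᵐ y ∂ν, 0 ≤ u y := by
    rw [ae_iff]
    have hms : MeasurableSet {y | ¬ 0 ≤ u y} := by
      have : {y | ¬ 0 ≤ u y} = {y | u y < 0} := by ext y; simp [not_le]
      rw [this]; exact measurableSet_lt hum measurable_const
    rw [hνdef, Measure.restrict_apply hms]
    have : {y | ¬ 0 ≤ u y} ∩ K = ∅ := by
      ext y; simp only [Set.mem_inter_iff, Set.mem_setOf_eq, Set.mem_empty_iff_false, iff_false]
      rintro ⟨h1, h2⟩; exact h1 (hK y h2)
    rw [this, measure_empty]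
  -- the chain of inequalities
  set f : EuclideanSpace ℝ (Fin n) → ℝ := fun y => d ^ (-c) * u y ^ (p - 1) with hfdef
  have h1 : ENNReal.ofReal (d ^ (-c) * ∫ y in K, u y ^ (p - 1)) ≤
      ∫⁻ y, ENNReal.ofReal (f y) ∂ν := by
    have hrw2 : d ^ (-c) * ∫ y in K, u y ^ (p - 1) = ∫ y, f y ∂ν := by
      rw [hνdef, hfdef]
      exact (integral_const_mul _ _).symm
    rw [hrw2]
    by_cases hfi : Integrable f ν
    · rw [ofReal_integral_eq_lintegral_ofReal hfi ?_]
      exact haeU.mono fun y hy => mul_nonneg (Real.rpow_nonneg (le_of_lt hd0) _)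
        (Real.rpow_nonneg hy _)
    · rw [integral_undef hfi]; simp
  have h2 : ∫⁻ y, ENNReal.ofReal (f y) ∂ν ≤ ∫⁻ y, G y ∂ν :=
    lintegral_mono_ae ((haeΩ.and haeU).mono fun y hy => hpt y hy.1 hy.2)
  have h3 : ∫⁻ y, G y ∂ν ≤ ∫⁻ y, G y := lintegral_mono' Measure.restrict_le_self le_rfl
  have h4 : ∫⁻ y, G y ≤ ENNReal.ofReal (d ^ (-c) * ∫ y in K, u y ^ (p - 1)) := hineq
  have hfin : ∫⁻ y, ENNReal.ofReal (f y) ∂ν ≠ ⊤ :=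
    ne_of_lt (lt_of_le_of_lt (h2.trans (h3.trans h4)) ENNReal.ofReal_lt_top)
  have E1 : ∫⁻ y, ENNReal.ofReal (f y) ∂ν = ∫⁻ y, G y ∂ν :=
    le_antisymm h2 ((h3.trans h4).trans h1)
  -- on K, u = u x0 a.e. (via strict inequality)
  have hνA : ν {y | u y ≠ u x0} = 0 := by
    by_contra hA
    have hlt : ∫⁻ y, ENNReal.ofReal (f y) ∂ν < ∫⁻ y, G y ∂ν := by
      refine lintegral_strict_mono_of_ae_le_of_ae_lt_on hGmeas.aemeasurable hfin
        ((haeΩ.and haeU).mono fun y hy => hpt y hy.1 hy.2) hA ?_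
      exact (haeΩ.and haeU).mono fun y hy hys => hpt_strict y hy.1 hy.2 hys
    exact absurd E1 (ne_of_lt hlt)
  -- off K, u = u x0 a.e. (via measure subtraction)
  have EG : ∫⁻ y, G y = ∫⁻ y, G y ∂ν := le_antisymm ((h4.trans h1).trans h2) h3
  have hGfin : ∫⁻ y, G y ∂ν ≠ ⊤ := E1 ▸ hfin
  set μ' : Measure (EuclideanSpace ℝ (Fin n)) := volume - ν with hμ'def
  have hsub : μ' + ν = volume := Measure.sub_add_cancel_of_le Measure.restrict_le_self
  have hzero : ∫⁻ y, G y ∂μ' = 0 := by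
    have hadd := lintegral_add_measure G μ' ν
    rw [hsub, EG] at hadd
    have h5 : (∫⁻ y, G y ∂ν) + 0 = (∫⁻ y, G y ∂ν) + ∫⁻ y, G y ∂μ' := by
      calc (∫⁻ y, G y ∂ν) + 0 = ∫⁻ y, G y ∂ν := add_zero _
        _ = (∫⁻ y, G y ∂μ') + ∫⁻ y, G y ∂ν := hadd
        _ = (∫⁻ y, G y ∂ν) + ∫⁻ y, G y ∂μ' := add_comm _ _
    exact ((ENNReal.add_right_inj hGfin).1 h5).symm
  have hσA : μ' {y | u y ≠ u x0} = 0 := by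
    have hae : ∀ᵐ y ∂μ', G y = 0 := by
      have := (lintegral_eq_zero_iff hGmeas).1 hzero
      filter_upwards [this] with y hy using hy
    have h0 : μ' {y | G y ≠ 0} = 0 := by
      rw [ae_iff] at hae
      simpa using hae
    refine measure_mono_null ?_ h0
    intro y hy
    exact ne_of_gt (hGpos y hy)
  have hA : volume {y | u y ≠ u x0} = 0 := by
    have : volume {y | u y ≠ u x0} = μ' {y | u y ≠ u x0} + ν {y | u y ≠ u x0} := by
      conv_lhs => rw [← hsub]
      exact Measure.add_apply _ _ _
    rw [this, hσA, hνA, add_zero]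
  have ha1 : ∀ᵐ y, u y = u x0 := by
    rw [ae_iff]; exact hA
  refine ⟨ha1.mono fun y h _ => h, ?_⟩
  intro h0 hμΩc
  have hex : ∃ y, y ∉ Ω ∧ u y = u x0 := by
    by_contra hcon
    push_neg at hcon
    have hsubset : Ωᶜ ⊆ {y | u y ≠ u x0} := fun y hy => hcon y hy
    exact absurd (measure_mono_null hsubset hA) (ne_of_gt hμΩc)
  obtain ⟨y0, hy0, hy0'⟩ := hex
  have hx00 : u x0 = 0 := le_antisymm hneg (hy0' ▸ h0 y0 hy0)
  exact ha1.mono fun y h _ => by rw [h, hx00]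
end
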